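/- The function x ↦ h(x)/(x+1) is strictly decreasing on the interval (-1, ∞), and the function x ↦ h(x)·(x+1) is strictly increasing on the interval (-1, ∞). -/

import Mathlib

/-!
Taking logarithms, `log h(x) - log h(y) = ∑ uₙ cₙ` with `cₙ = ℓ(2n + x) - ℓ(2n + y)`, where
`ℓ(s) = log (s / (s + 1))` is `logRatio`. For `x ≤ y` the `cₙ` are nonpositive and increase
with `n` (`ℓ` is increasing and so is `s ↦ ℓ(s) - ℓ(s + 2)`), while the partial sums
`∑_{n=1}^N uₙ` of the Thue–Morse sequence lie in `[-2, 0]`, because `u (2k) + u (2k + 1) = 0`.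
Abel summation then gives `0 ≤ log h(x) - log h(y) ≤ -2 c₁`. The lower bound makes `h`
decreasing. The upper bound is strictly beaten by `log (y + 1) - log (x + 1)`, since
`(t + 1) (t + 3)² / (t + 2)² = (1 - (t + 2)⁻²) (t + 3)` is a product of positive increasing
factors.
-/

open Filter Finset Topology

/-- The Thue–Morse sequence with values `±1`: `u n = (-1)^(s₂ n)` where `s₂ n`
is the sum of the binary digits of `n`. -/
def u (n : ℕ) : ℤ := (-1) ^ (Nat.digits 2 n).sum

lemma u_two_mul (k : ℕ) : u (2 * k) = u k := by
  rcases k.eq_zero_or_pos with rfl | hk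
  · rfl
  · rw [u, u, Nat.digits_def' one_lt_two (by omega)]
    simp

lemma u_two_mul_add_one (k : ℕ) : u (2 * k + 1) = -u k := by
  rw [u, u, Nat.digits_def' one_lt_two (by omega), Nat.mul_add_mod, Nat.mul_add_div two_pos]
  simp [pow_add]

lemma u_eq_one_or_neg_one (n : ℕ) : u n = 1 ∨ u n = -1 :=
  neg_one_pow_eq_or ℤ _

lemma sum_range_two_mul_u (M : ℕ) : ∑ k ∈ range (2 * M), u k = 0 := by
  induction M with
  | zero => rfl
  | succ M ih =>
    rw [mul_add_one, sum_range_succ, sum_range_succ, ih, u_two_mul_add_one, u_two_mul]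
    ring

lemma sum_Icc_u_mem_Icc (N : ℕ) : ∑ n ∈ Icc 1 N, (u n : ℝ) ∈ Set.Icc (-2) 0 := by
  have hsplit : ∑ k ∈ range (N + 1), u k = u 0 + ∑ n ∈ Icc 1 N, u n := by
    rw [range_eq_Ico, sum_eq_sum_Ico_succ_bot N.succ_pos]
    rfl
  have hrange : ∑ k ∈ range (N + 1), u k ∈ Set.Icc (-1) 1 := by
    obtain ⟨M, hM | hM⟩ := (N + 1).even_or_odd'
    · simp [hM, sum_range_two_mul_u]
    · rcases u_eq_one_or_neg_one M with hu | hu <;>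
        simp [hM, sum_range_succ, sum_range_two_mul_u, u_two_mul, hu]
  have hu0 : u 0 = 1 := rfl
  rw [hsplit, hu0] at hrange
  rw [← Int.cast_sum, Set.mem_Icc]
  exact ⟨by exact_mod_cast (by linarith [hrange.1] : (-2 : ℤ) ≤ _),
    by exact_mod_cast (by linarith [hrange.2] : _ ≤ (0 : ℤ))⟩

section AbelSummation

variable {a c : ℕ → ℝ} {B : ℝ}

lemma sum_Icc_mul_bounds_of_partialSums (ha : ∀ N, ∑ n ∈ Icc 1 N, a n ∈ Set.Icc (-B) 0)
    (hc : ∀ n, 1 ≤ n → c n ≤ c (n + 1)) (N : ℕ) :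
    (∑ n ∈ Icc 1 N, a n) * c (N + 1) ≤ ∑ n ∈ Icc 1 N, a n * c n ∧
      ∑ n ∈ Icc 1 N, a n * c n ≤ (∑ n ∈ Icc 1 N, a n + B) * c (N + 1) - B * c 1 := by
  induction N with
  | zero => simp
  | succ N ih =>
    obtain ⟨hlo, hhi⟩ := ha (N + 1)
    have hcN := hc (N + 1) (by omega)
    rw [sum_Icc_succ_top (by omega), sum_Icc_succ_top (by omega)] at *
    constructor
    · nlinarith [mul_le_mul_of_nonpos_left hcN hhi]
    · nlinarith [mul_le_mul_of_nonneg_left hcN (neg_le_iff_add_nonneg.mp hlo)]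

lemma sum_Icc_mul_mem_Icc_of_partialSums (ha : ∀ N, ∑ n ∈ Icc 1 N, a n ∈ Set.Icc (-B) 0)
    (hc : ∀ n, 1 ≤ n → c n ≤ c (n + 1)) (hc₀ : ∀ n, 1 ≤ n → c n ≤ 0) (N : ℕ) :
    ∑ n ∈ Icc 1 N, a n * c n ∈ Set.Icc 0 (-B * c 1) := by
  obtain ⟨hlo, hhi⟩ := sum_Icc_mul_bounds_of_partialSums ha hc N
  obtain ⟨hA₁, hA₂⟩ := ha N
  have hcN := hc₀ (N + 1) (by omega)
  exact ⟨by nlinarith, by nlinarith [neg_le_iff_add_nonneg.mp hA₁]⟩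

end AbelSummation

noncomputable def logRatio (s : ℝ) : ℝ := Real.log (s / (s + 1))

lemma logRatio_monotoneOn : MonotoneOn logRatio (Set.Ioi 0) := by
  intro s (hs : 0 < s) r (hr : 0 < r) hsr
  refine Real.log_le_log (by positivity) ?_
  rw [div_le_div_iff₀ (by positivity) (by positivity)]
  nlinarith

lemma monotoneOn_logRatio_sub_logRatio_add_two :
    MonotoneOn (fun s => logRatio s - logRatio (s + 2)) (Set.Ioi 0) := by
  intro s (hs : 0 < s) r (hr : 0 < r) hsr
  have hprod :
      s / (s + 1) * ((r + 2) / (r + 2 + 1)) ≤ r / (r + 1) * ((s + 2) / (s + 2 + 1)) := by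
    rw [div_mul_div_comm, div_mul_div_comm, div_le_div_iff₀ (by positivity) (by positivity)]
    nlinarith [mul_nonneg (sub_nonneg.mpr hsr) (by positivity : (0 : ℝ) ≤ 3 + s + r)]
  have := Real.log_le_log (by positivity) hprod
  rw [Real.log_mul (by positivity) (by positivity),
    Real.log_mul (by positivity) (by positivity)] at this
  simp only [logRatio]
  linarith

lemma log_add_one_sub_two_mul_logRatio_add_two {t : ℝ} (ht : -1 < t) :
    Real.log (t + 1) - 2 * logRatio (t + 2) =
      Real.log (1 - 1 / (t + 2) ^ 2) + Real.log (t + 3) := by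
  have h₁ : 0 < t + 1 := by linarith
  have h₂ : 0 < t + 2 := by linarith
  have h₃ : 0 < t + 3 := by linarith
  have hfac : 1 - 1 / (t + 2) ^ 2 = (t + 1) * (t + 3) / (t + 2) ^ 2 := by
    field_simp
    ring
  rw [hfac, Real.log_div (by positivity) (by positivity), Real.log_mul h₁.ne' h₃.ne',
    Real.log_pow, logRatio, Real.log_div h₂.ne' (by linarith), show t + 2 + 1 = t + 3 by ring]
  ring

lemma strictMonoOn_log_add_one_sub_two_mul_logRatio_add_two :
    StrictMonoOn (fun t => Real.log (t + 1) - 2 * logRatio (t + 2)) (Set.Ioi (-1)) := by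
  intro s (hs : -1 < s) r (hr : -1 < r) hsr
  simp only [log_add_one_sub_two_mul_logRatio_add_two hs,
    log_add_one_sub_two_mul_logRatio_add_two hr]
  have hpos : ∀ t : ℝ, -1 < t → 0 < 1 - 1 / (t + 2) ^ 2 := fun t ht => by
    rw [sub_pos, div_lt_one (by nlinarith)]
    nlinarith
  refine add_lt_add_of_le_of_lt ?_ ?_
  · exact Real.log_le_log (hpos s hs) (by gcongr <;> nlinarith)
  · exact Real.log_lt_log (by linarith) (by linarith)

lemma log_prod_Icc_eq_sum_logRatio {t : ℝ} (ht : -2 < t) (N : ℕ) :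
    Real.log (∏ n ∈ Icc 1 N, ((2 * (n : ℝ) + t) / (2 * (n : ℝ) + 1 + t)) ^ (u n))
      = ∑ n ∈ Icc 1 N, (u n : ℝ) * logRatio (2 * n + t) := by
  have hpos : ∀ n ∈ Icc 1 N, 0 < 2 * (n : ℝ) + t := fun n hn => by
    have : (1 : ℝ) ≤ n := by exact_mod_cast (mem_Icc.mp hn).1
    linarith
  rw [Real.log_prod fun n hn => zpow_ne_zero _ <|
    div_ne_zero (hpos n hn).ne' (by linarith [hpos n hn])]
  refine sum_congr rfl fun n hn => ?_
  rw [Real.log_zpow, logRatio, add_right_comm]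

section Limit

variable {h : ℝ → ℝ}
    (hh : ∀ x : ℝ, -2 < x →
      Tendsto (fun N : ℕ => ∏ n ∈ Finset.Icc 1 N,
        ((2 * (n : ℝ) + x) / (2 * (n : ℝ) + 1 + x)) ^ (u n)) atTop (𝓝 (h x)))
    (hpos : ∀ x : ℝ, -2 < x → 0 < h x)
include hh hpos

lemma log_sub_log_mem_Icc {x y : ℝ} (hx : -2 < x) (hxy : x ≤ y) :
    Real.log (h x) - Real.log (h y) ∈ Set.Icc 0 (2 * (logRatio (y + 2) - logRatio (x + 2))) := by
  have hy : -2 < y := hx.trans_le hxy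
  set c : ℕ → ℝ := fun n => logRatio (2 * n + x) - logRatio (2 * n + y)
  have hlim : Tendsto (fun N => ∑ n ∈ Icc 1 N, (u n : ℝ) * c n) atTop
      (𝓝 (Real.log (h x) - Real.log (h y))) := by
    refine (((hh x hx).log (hpos x hx).ne').sub ((hh y hy).log (hpos y hy).ne')).congr
      fun N => ?_
    simp only [log_prod_Icc_eq_sum_logRatio hx, log_prod_Icc_eq_sum_logRatio hy, c, mul_sub,
      sum_sub_distrib]
  have harg_pos : ∀ n : ℕ, 1 ≤ n → ∀ t, -2 < t → (0 : ℝ) < 2 * n + t := fun n hn t ht => by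
    have : (1 : ℝ) ≤ n := by exact_mod_cast hn
    linarith
  have hc : ∀ n, 1 ≤ n → c n ≤ c (n + 1) := fun n hn => by
    have := monotoneOn_logRatio_sub_logRatio_add_two (harg_pos n hn x hx) (harg_pos n hn y hy)
      (by linarith)
    simp only [c]
    push_cast
    ring_nf at this ⊢
    linarith
  have hc₀ : ∀ n, 1 ≤ n → c n ≤ 0 := fun n hn =>
    sub_nonpos.mpr (logRatio_monotoneOn (harg_pos n hn x hx) (harg_pos n hn y hy) (by linarith))
  have hmem := isClosed_Icc.mem_of_tendsto hlim (Eventually.of_forall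
    (sum_Icc_mul_mem_Icc_of_partialSums sum_Icc_u_mem_Icc hc hc₀))
  convert hmem using 2
  simp only [c]
  push_cast
  ring_nf

lemma antitoneOn_of_tendsto_prod : AntitoneOn h (Set.Ioi (-2)) := fun x hx y hy hxy =>
  (Real.log_le_log_iff (hpos y hy) (hpos x hx)).mp
    (sub_nonneg.mp (log_sub_log_mem_Icc hh hpos hx hxy).1)

lemma strictMonoOn_mul_add_one_of_tendsto_prod :
    StrictMonoOn (fun x => h x * (x + 1)) (Set.Ioi (-1)) := by
  intro x (hx : -1 < x) y (hy : -1 < y) hxy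
  have hx₂ : -2 < x := by linarith
  have hy₂ : -2 < y := by linarith
  have hbound := (log_sub_log_mem_Icc hh hpos hx₂ hxy.le).2
  have hgrowth := strictMonoOn_log_add_one_sub_two_mul_logRatio_add_two hx hy hxy
  have := hpos x hx₂
  have := hpos y hy₂
  rw [← Real.log_lt_log_iff (by nlinarith) (by nlinarith),
    Real.log_mul (by positivity) (by linarith), Real.log_mul (by positivity) (by linarith)]
  linarith

end Limit

/-- If `h x` is, for `x > -2`, the (positive) limit of the partial products
`∏_{n=1}^{N} ((2n+x)/(2n+1+x))^{u_n}`, then `x ↦ h(x)/(x+1)` is strictly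
decreasing on `(-1, ∞)` and `x ↦ h(x)·(x+1)` is strictly increasing on `(-1, ∞)`. -/
theorem stmt_9 (h : ℝ → ℝ)
    (hh : ∀ x : ℝ, -2 < x →
      Tendsto (fun N : ℕ => ∏ n ∈ Finset.Icc 1 N,
        ((2 * (n : ℝ) + x) / (2 * (n : ℝ) + 1 + x)) ^ (u n)) atTop (𝓝 (h x)))
    (hpos : ∀ x : ℝ, -2 < x → 0 < h x) :
    StrictAntiOn (fun x => h x / (x + 1)) (Set.Ioi (-1 : ℝ)) ∧
      StrictMonoOn (fun x => h x * (x + 1)) (Set.Ioi (-1 : ℝ)) := by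
  refine ⟨fun x (hx : -1 < x) y (hy : -1 < y) hxy => ?_,
    strictMonoOn_mul_add_one_of_tendsto_prod hh hpos⟩
  have hx₂ : -2 < x := by linarith
  have hy₂ : -2 < y := by linarith
  calc h y / (y + 1) < h y / (x + 1) :=
        div_lt_div_of_pos_left (hpos y hy₂) (by linarith) (by linarith)
    _ ≤ h x / (x + 1) := by
        gcongr
        · linarith
        · exact antitoneOn_of_tendsto_prod hh hpos hx₂ hy₂ hxy.le
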